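/- arXiv:1308.1263 — 5 statements merged into one kernel-verified Lean document; each statement's English description precedes it below -/
import Mathlib

section
/- Let P be a probability measure and ν a finite measure, both with densities p and r with respect to a σ-finite measure σ. Then ρ_α(ν,P) = ∫ r^α p^(1-α) dσ converges to P(r > 0) = ∫_{r>0} p dσ as α ↓ 0. -/
open MeasureTheory Set Filter Topology

/-!
Pointwise, `r ^ α * p ^ (1 - α) → p` as `α → 0` wherever `r > 0`, while the integrand vanishes
where `r = 0`; so the limit of the integrands is `p` restricted to `{r > 0}`. For `α ∈ [0, 1]` the
weighted AM–GM inequality bounds the integrand by `α r + (1 - α) p ≤ r + p`, which is integrable,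
and dominated convergence gives the claim.
-/

noncomputable section

/-- The integrand of the Hellinger transform at the density values `a = p x` and `b = r x`. -/
def hellingerKernel (α a b : ℝ) : ℝ :=
  if a = 0 ∨ b = 0 then 0 else b ^ α * a ^ (1 - α)

theorem measurable_hellingerKernel (α : ℝ) :
    Measurable fun z : ℝ × ℝ => hellingerKernel α z.1 z.2 := by
  unfold hellingerKernel
  refine Measurable.ite ?_ measurable_const (by fun_prop)
  exact (measurableSet_singleton 0).preimage measurable_fst |>.union
    ((measurableSet_singleton 0).preimage measurable_snd)

theorem hellingerKernel_nonneg (α : ℝ) {a b : ℝ} (ha : 0 ≤ a) (hb : 0 ≤ b) :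
    0 ≤ hellingerKernel α a b := by
  unfold hellingerKernel
  split_ifs
  · exact le_rfl
  · positivity

theorem hellingerKernel_le_add {α a b : ℝ} (ha : 0 ≤ a) (hb : 0 ≤ b) (hα₀ : 0 ≤ α)
    (hα₁ : α ≤ 1) : hellingerKernel α a b ≤ b + a := by
  unfold hellingerKernel
  split_ifs
  · positivity
  · have amgm := Real.geom_mean_le_arith_mean2_weighted hα₀ (sub_nonneg.2 hα₁) hb ha
      (add_sub_cancel α 1)
    nlinarith

theorem tendsto_hellingerKernel_zero (a : ℝ) {b : ℝ} (hb : 0 ≤ b) :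
    Tendsto (fun α => hellingerKernel α a b) (𝓝 0) (𝓝 (if 0 < b then a else 0)) := by
  unfold hellingerKernel
  rcases eq_or_ne a 0 with rfl | ha
  · simp
  rcases hb.eq_or_lt with rfl | hb
  · simp
  simp only [ha, hb.ne', hb, or_self, if_false, if_true]
  have hr : Tendsto (fun α : ℝ => b ^ α) (𝓝 0) (𝓝 1) := by
    simpa using (Real.continuousAt_const_rpow (b := 0) hb.ne').tendsto
  have hp : Tendsto (fun α : ℝ => a ^ (1 - α)) (𝓝 0) (𝓝 a) := by
    exact (Real.rpow_one a ▸ (Real.continuousAt_const_rpow (b := 1) ha).tendsto).comp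
      ((continuous_sub_left (1 : ℝ)).tendsto' 0 1 (sub_zero 1))
  simpa using hr.mul hp

end

theorem hellinger_transform_tendsto_zero_general
    {X : Type*} [MeasurableSpace X] (σ : Measure X)
    (p r : X → ℝ) (hp : Measurable p) (hr : Measurable r)
    (hp0 : ∀ x, 0 ≤ p x) (hr0 : ∀ x, 0 ≤ r x)
    (hpInt : Integrable p σ) (hrInt : Integrable r σ) :
    Tendsto
      (fun α : ℝ => ∫ x, (if p x = 0 ∨ r x = 0 then 0 else r x ^ α * p x ^ (1 - α)) ∂σ)
      (nhdsWithin 0 (Ioi 0))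
      (nhds (∫ x in {x | 0 < r x}, p x ∂σ)) := by
  change Tendsto (fun α => ∫ x, hellingerKernel α (p x) (r x) ∂σ) _ _
  rw [← integral_indicator (measurableSet_lt measurable_const hr)]
  refine tendsto_integral_filter_of_dominated_convergence (fun x => r x + p x)
    (.of_forall fun α => ((measurable_hellingerKernel α).comp (hp.prodMk hr)).aestronglyMeasurable)
    ?_ (hrInt.add hpInt) (.of_forall fun x => ?_)
  · filter_upwards [Ioo_mem_nhdsGT (zero_lt_one' ℝ)] with α hα
    refine .of_forall fun x => ?_
    rw [Real.norm_of_nonneg (hellingerKernel_nonneg α (hp0 x) (hr0 x))]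
    exact hellingerKernel_le_add (hp0 x) (hr0 x) hα.1.le hα.2.le
  · simpa [indicator_apply] using
      (tendsto_hellingerKernel_zero (p x) (hr0 x)).mono_left nhdsWithin_le_nhds

/-- The Hellinger transform `ρ_α(ν,P) = ∫ r^α p^(1-α) dσ` (with the integrand taken to be
`0` where `p = 0` or `r = 0`) converges to `P(r > 0) = ∫_{r>0} p dσ` as `α ↓ 0`.
Here `p` is the density of the probability measure `P` and `r` the density of the finite
measure `ν` with respect to the σ-finite measure `σ`. -/
theorem hellinger_transform_tendsto_zero
    {X : Type*} [MeasurableSpace X] (σ : Measure X) [SigmaFinite σ]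
    (p r : X → ℝ) (hp : Measurable p) (hr : Measurable r)
    (hp0 : ∀ x, 0 ≤ p x) (hr0 : ∀ x, 0 ≤ r x)
    (hpInt : Integrable p σ) (hrInt : Integrable r σ)
    (hprob : ∫ x, p x ∂σ = 1) :
    Tendsto
      (fun α : ℝ => ∫ x, (if p x = 0 ∨ r x = 0 then 0 else r x ^ α * p x ^ (1 - α)) ∂σ)
      (nhdsWithin 0 (Ioi 0))
      (nhds (∫ x in {x | 0 < r x}, p x ∂σ)) :=
  hellinger_transform_tendsto_zero_general σ p r hp hr hp0 hr0 hpInt hrInt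
end

section
/- Let P0, P, Q be probability measures dominated by a σ-finite measure μ with densities p0, p, q, and suppose p/q ∈ L²(Q) and p0/q ∈ L²(Q). Then P0[(p/q)^{1/2}] ≤ 1 − (1/2) H(P0,P)² + H(P0,Q) · ‖p0/q‖_{2,Q} · ‖p/q‖_{2,Q}, where H is the Hellinger distance H(P,Q)² = ∫ (√p − √q)² dμ (normalized so that ∫ √p0 √p dμ = 1 − H(P0,P)²/2). -/
open MeasureTheory Set

/-- The squared Hellinger distance between densities: `H(P,Q)² = ∫ (√p − √q)² dμ`. -/
noncomputable def hellingerSq {X : Type*} [MeasurableSpace X] (μ : Measure X)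
    (p q : X → ℝ) : ℝ :=
  ∫ x, (Real.sqrt (p x) - Real.sqrt (q x)) ^ 2 ∂μ

/-!
Write `√(p/q) p0 = √(p0 p) + (√p0 - √q) √(p0 p / q)`. The first term integrates to the Hellinger
affinity `1 - H(P0,P)²/2`. Cauchy–Schwarz in `L²(μ)` bounds the integral of the second term by
`H(P0,Q) (∫ p0 p / q dμ)^{1/2}`, and Cauchy–Schwarz in `L²(Q)` bounds
`∫ p0 p / q dμ = Q[(p0/q)(p/q)]` by `‖p0/q‖_{2,Q} ‖p/q‖_{2,Q}`. Both norms are at least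
`Q[p/q] = 1`, so the square root of their product is at most the product itself.
-/

section

variable {X : Type*} [MeasurableSpace X] {μ : Measure X}

theorem integral_mul_le_sqrt_mul_sqrt {f g : X → ℝ} (hf : MemLp f 2 μ) (hg : MemLp g 2 μ) :
    ∫ x, f x * g x ∂μ ≤ √(∫ x, f x ^ 2 ∂μ) * √(∫ x, g x ^ 2 ∂μ) := by
  have holder := integral_mul_norm_le_Lp_mul_Lq Real.HolderConjugate.two_two
    (by simpa using hf) (by simpa using hg)
  simp only [Real.norm_eq_abs, Real.rpow_two, sq_abs, ← Real.sqrt_eq_rpow] at holder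
  refine le_trans (integral_mono (hf.integrable_mul hg) ?_
    fun _ => (le_abs_self _).trans (abs_mul _ _).le) holder
  exact (hf.integrable_mul hg).norm.congr (.of_forall fun _ => by simp)

theorem memLp_two_sqrt {f : X → ℝ} (hf : Integrable f μ) (hf0 : 0 ≤ᵐ[μ] f) :
    MemLp (fun x => √(f x)) 2 μ :=
  (memLp_two_iff_integrable_sq (Real.continuous_sqrt.comp_aestronglyMeasurable
    hf.aestronglyMeasurable)).2 (hf.congr (hf0.mono fun _ hx => (Real.sq_sqrt hx).symm))

theorem memLp_two_sqrt_mul {g h : X → ℝ} (hg : MemLp g 2 μ) (hh : MemLp h 2 μ)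
    (hg0 : 0 ≤ᵐ[μ] g) (hh0 : 0 ≤ᵐ[μ] h) : MemLp (fun x => √(g x * h x)) 2 μ :=
  memLp_two_sqrt (hg.integrable_mul hh) <| by
    filter_upwards [hg0, hh0] with x hgx hhx using mul_nonneg hgx hhx

theorem integrable_sqrt_mul_sqrt {f g : X → ℝ} (hf : Integrable f μ) (hg : Integrable g μ)
    (hf0 : 0 ≤ᵐ[μ] f) (hg0 : 0 ≤ᵐ[μ] g) : Integrable (fun x => √(f x) * √(g x)) μ :=
  (memLp_two_sqrt hf hf0).integrable_mul (memLp_two_sqrt hg hg0)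

theorem integral_mul_sqrt_mul_le {f g h : X → ℝ} (hf : MemLp f 2 μ) (hg : MemLp g 2 μ)
    (hh : MemLp h 2 μ) (hg0 : 0 ≤ᵐ[μ] g) (hh0 : 0 ≤ᵐ[μ] h) :
    ∫ x, f x * √(g x * h x) ∂μ
      ≤ √(∫ x, f x ^ 2 ∂μ) * √(√(∫ x, g x ^ 2 ∂μ) * √(∫ x, h x ^ 2 ∂μ)) := by
  refine (integral_mul_le_sqrt_mul_sqrt hf (memLp_two_sqrt_mul hg hh hg0 hh0)).trans ?_
  gcongr
  calc ∫ x, √(g x * h x) ^ 2 ∂μ = ∫ x, g x * h x ∂μ := by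
        refine integral_congr_ae ?_
        filter_upwards [hg0, hh0] with x hgx hhx using Real.sq_sqrt (mul_nonneg hgx hhx)
    _ ≤ √(∫ x, g x ^ 2 ∂μ) * √(∫ x, h x ^ 2 ∂μ) := integral_mul_le_sqrt_mul_sqrt hg hh

theorem integral_sqrt_mul_sqrt_eq_one_sub_half_hellingerSq {p q : X → ℝ}
    (hp0 : 0 ≤ᵐ[μ] p) (hq0 : 0 ≤ᵐ[μ] q) (hp : ∫ x, p x ∂μ = 1) (hq : ∫ x, q x ∂μ = 1) :
    ∫ x, √(p x) * √(q x) ∂μ = 1 - (1/2) * hellingerSq μ p q := by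
  have hpi := integrable_of_integral_eq_one hp
  have hqi := integrable_of_integral_eq_one hq
  have expand : hellingerSq μ p q = ∫ x, (p x + q x - 2 * (√(p x) * √(q x))) ∂μ := by
    refine integral_congr_ae ?_
    filter_upwards [hp0, hq0] with x hpx hqx
    linear_combination Real.sq_sqrt hpx + Real.sq_sqrt hqx
  rw [expand, integral_sub (f := fun x => p x + q x) (hpi.add hqi)
    ((integrable_sqrt_mul_sqrt hpi hqi hp0 hq0).const_mul 2), integral_add hpi hqi,
    integral_const_mul, hp, hq]
  ring

/-- Multiplication by `√q` is an isometry from `L²(Q)`, `dQ = q dμ`, into `L²(μ)`; this is the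
image of the likelihood ratio `p / q`. -/
noncomputable def divMulSqrt (p q : X → ℝ) (x : X) : ℝ :=
  p x / q x * √(q x)

theorem divMulSqrt_nonneg {p q : X → ℝ} (hp0 : 0 ≤ᵐ[μ] p) (hq0 : 0 ≤ᵐ[μ] q) :
    0 ≤ᵐ[μ] divMulSqrt p q := by
  filter_upwards [hp0, hq0] with x hpx hqx
  exact mul_nonneg (div_nonneg hpx hqx) (Real.sqrt_nonneg _)

theorem memLp_two_divMulSqrt {p q : X → ℝ} (hp : AEStronglyMeasurable p μ)
    (hq : AEStronglyMeasurable q μ) (hq0 : 0 ≤ᵐ[μ] q)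
    (hpq : Integrable (fun x => (p x / q x) ^ 2 * q x) μ) :
    MemLp (divMulSqrt p q) 2 μ := by
  have hmeas : AEStronglyMeasurable (divMulSqrt p q) μ :=
    (hp.aemeasurable.div hq.aemeasurable).aestronglyMeasurable.mul
      (Real.continuous_sqrt.comp_aestronglyMeasurable hq)
  refine (memLp_two_iff_integrable_sq hmeas).2 (hpq.congr ?_)
  filter_upwards [hq0] with x hx
  rw [divMulSqrt, mul_pow, Real.sq_sqrt hx]

theorem integral_divMulSqrt_sq {p q : X → ℝ} (hq0 : 0 ≤ᵐ[μ] q) :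
    ∫ x, divMulSqrt p q x ^ 2 ∂μ = ∫ x, (p x / q x) ^ 2 * q x ∂μ := by
  refine integral_congr_ae ?_
  filter_upwards [hq0] with x hx
  rw [divMulSqrt, mul_pow, Real.sq_sqrt hx]

theorem one_le_integral_div_sq_mul {p q : X → ℝ} (hqpos : ∀ᵐ x ∂μ, 0 < q x)
    (hp : ∫ x, p x ∂μ = 1) (hq : ∫ x, q x ∂μ = 1)
    (hpq : Integrable (fun x => (p x / q x) ^ 2 * q x) μ) :
    1 ≤ ∫ x, (p x / q x) ^ 2 * q x ∂μ := by
  have hq0 : 0 ≤ᵐ[μ] q := hqpos.mono fun _ hx => hx.le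
  have hqi := integrable_of_integral_eq_one hq
  have hfactor : ∫ x, divMulSqrt p q x * √(q x) ∂μ = 1 := by
    rw [← hp]
    refine integral_congr_ae ?_
    filter_upwards [hqpos] with x hx
    rw [divMulSqrt, mul_assoc, Real.mul_self_sqrt hx.le, div_mul_cancel₀ _ hx.ne']
  have cs := integral_mul_le_sqrt_mul_sqrt
    (memLp_two_divMulSqrt (integrable_of_integral_eq_one hp).aestronglyMeasurable
      hqi.aestronglyMeasurable hq0 hpq) (memLp_two_sqrt hqi hq0)
  rwa [hfactor, integral_divMulSqrt_sq hq0,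
    integral_congr_ae (hq0.mono fun _ hx => Real.sq_sqrt hx), hq, Real.sqrt_one, mul_one,
    Real.one_le_sqrt] at cs

theorem sqrt_div_mul_eq_sqrt_mul_sqrt_add {a b c : ℝ} (ha : 0 ≤ a) (hb : 0 ≤ b) (hc : 0 < c) :
    √(b / c) * a = √a * √b + (√a - √c) * √(a / c * √c * (b / c * √c)) := by
  have hc' : 0 < √c := Real.sqrt_pos.2 hc
  have hprod : a / c * √c * (b / c * √c) = (√a * √b / √c) ^ 2 := by
    rw [div_pow, mul_pow, Real.sq_sqrt ha, Real.sq_sqrt hb, Real.sq_sqrt hc.le]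
    field_simp
    linear_combination (a * b) * Real.mul_self_sqrt hc.le
  rw [hprod, Real.sqrt_sq (by positivity), Real.sqrt_div hb]
  field_simp
  linear_combination -√b * Real.sq_sqrt ha

theorem integral_sqrt_div_mul_le {p0 p q : X → ℝ} (hp0_int : Integrable p0 μ)
    (hp_int : Integrable p μ) (hq_int : Integrable q μ) (hp0_nonneg : 0 ≤ᵐ[μ] p0)
    (hp_nonneg : 0 ≤ᵐ[μ] p) (hqpos : ∀ᵐ x ∂μ, 0 < q x)
    (hL2p0 : Integrable (fun x => (p0 x / q x) ^ 2 * q x) μ)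
    (hL2p : Integrable (fun x => (p x / q x) ^ 2 * q x) μ) :
    ∫ x, √(p x / q x) * p0 x ∂μ
      ≤ ∫ x, √(p0 x) * √(p x) ∂μ + √(hellingerSq μ p0 q)
        * √(√(∫ x, (p0 x / q x) ^ 2 * q x ∂μ) * √(∫ x, (p x / q x) ^ 2 * q x ∂μ)) := by
  have hq0 : 0 ≤ᵐ[μ] q := hqpos.mono fun _ hx => hx.le
  have hd : MemLp (fun x => √(p0 x) - √(q x)) 2 μ :=
    (memLp_two_sqrt hp0_int hp0_nonneg).sub (memLp_two_sqrt hq_int hq0)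
  have hu0 :=
    memLp_two_divMulSqrt hp0_int.aestronglyMeasurable hq_int.aestronglyMeasurable hq0 hL2p0
  have hu := memLp_two_divMulSqrt hp_int.aestronglyMeasurable hq_int.aestronglyMeasurable hq0 hL2p
  have hu0_nonneg := divMulSqrt_nonneg hp0_nonneg hq0
  have hu_nonneg := divMulSqrt_nonneg hp_nonneg hq0
  have hrem : Integrable (fun x => (√(p0 x) - √(q x))
      * √(divMulSqrt p0 q x * divMulSqrt p q x)) μ :=
    hd.integrable_mul (memLp_two_sqrt_mul hu0 hu hu0_nonneg hu_nonneg)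
  have hsplit : ∫ x, √(p x / q x) * p0 x ∂μ = ∫ x, √(p0 x) * √(p x) ∂μ
      + ∫ x, (√(p0 x) - √(q x)) * √(divMulSqrt p0 q x * divMulSqrt p q x) ∂μ := by
    rw [← integral_add (integrable_sqrt_mul_sqrt hp0_int hp_int hp0_nonneg hp_nonneg) hrem]
    refine integral_congr_ae ?_
    filter_upwards [hp0_nonneg, hp_nonneg, hqpos] with x hp0x hpx hqx
      using sqrt_div_mul_eq_sqrt_mul_sqrt_add hp0x hpx hqx
  have hcs := integral_mul_sqrt_mul_le hd hu0 hu hu0_nonneg hu_nonneg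
  rw [integral_divMulSqrt_sq hq0, integral_divMulSqrt_sq hq0] at hcs
  rw [hsplit]
  exact add_le_add_right hcs _

end

theorem half_moment_bound_via_hellinger_general
    {X : Type*} [MeasurableSpace X] (μ : Measure X)
    (p0 p q : X → ℝ)
    (hp00 : ∀ x, 0 ≤ p0 x) (hp0 : ∀ x, 0 ≤ p x)
    (hqpos : ∀ᵐ x ∂μ, 0 < q x)
    (hprob0 : ∫ x, p0 x ∂μ = 1) (hprobp : ∫ x, p x ∂μ = 1) (hprobq : ∫ x, q x ∂μ = 1)
    (hL2p : Integrable (fun x => (p x / q x) ^ 2 * q x) μ)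
    (hL2p0 : Integrable (fun x => (p0 x / q x) ^ 2 * q x) μ) :
    ∫ x, Real.sqrt (p x / q x) * p0 x ∂μ
      ≤ 1 - (1/2) * hellingerSq μ p0 p
        + Real.sqrt (hellingerSq μ p0 q)
          * (∫ x, (p0 x / q x) ^ 2 * q x ∂μ) ^ ((1:ℝ)/2)
          * (∫ x, (p x / q x) ^ 2 * q x ∂μ) ^ ((1:ℝ)/2) := by
  rw [← Real.sqrt_eq_rpow, ← Real.sqrt_eq_rpow, mul_assoc,
    ← integral_sqrt_mul_sqrt_eq_one_sub_half_hellingerSq (.of_forall hp00) (.of_forall hp0)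
      hprob0 hprobp]
  refine (integral_sqrt_div_mul_le (integrable_of_integral_eq_one hprob0)
    (integrable_of_integral_eq_one hprobp) (integrable_of_integral_eq_one hprobq)
    (.of_forall hp00) (.of_forall hp0) hqpos hL2p0 hL2p).trans ?_
  gcongr
  exact Real.sqrt_le_self_iff.2 <| .inr <| one_le_mul_of_one_le_of_one_le
    (Real.one_le_sqrt.2 (one_le_integral_div_sq_mul hqpos hprob0 hprobq hL2p0))
    (Real.one_le_sqrt.2 (one_le_integral_div_sq_mul hqpos hprobp hprobq hL2p))

/-- If `p0`, `p`, `q` are probability densities w.r.t. `μ` with `q > 0` a.e. and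
`p/q, p0/q ∈ L²(Q)`, then
`P0[(p/q)^{1/2}] ≤ 1 − (1/2) H(P0,P)² + H(P0,Q) · ‖p0/q‖_{2,Q} · ‖p/q‖_{2,Q}`,
where `‖f‖_{2,Q} = (∫ f² dQ)^{1/2} = (∫ f² q dμ)^{1/2}`. -/
theorem half_moment_bound_via_hellinger
    {X : Type*} [MeasurableSpace X] (μ : Measure X) [SigmaFinite μ]
    (p0 p q : X → ℝ) (hp0m : Measurable p0) (hpm : Measurable p) (hqm : Measurable q)
    (hp00 : ∀ x, 0 ≤ p0 x) (hp0 : ∀ x, 0 ≤ p x)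
    (hqpos : ∀ᵐ x ∂μ, 0 < q x)
    (hprob0 : ∫ x, p0 x ∂μ = 1) (hprobp : ∫ x, p x ∂μ = 1) (hprobq : ∫ x, q x ∂μ = 1)
    (hL2p : Integrable (fun x => (p x / q x) ^ 2 * q x) μ)
    (hL2p0 : Integrable (fun x => (p0 x / q x) ^ 2 * q x) μ)
    (hIntHalf : Integrable (fun x => Real.sqrt (p x / q x) * p0 x) μ) :
    ∫ x, Real.sqrt (p x / q x) * p0 x ∂μ
      ≤ 1 - (1/2) * hellingerSq μ p0 p
        + Real.sqrt (hellingerSq μ p0 q)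
          * (∫ x, (p0 x / q x) ^ 2 * q x ∂μ) ^ ((1:ℝ)/2)
          * (∫ x, (p x / q x) ^ 2 * q x ∂μ) ^ ((1:ℝ)/2) :=
  half_moment_bound_via_hellinger_general μ p0 p q hp00 hp0 hqpos hprob0 hprobp hprobq hL2p hL2p0
end

section
/- Let 𝒫 be a dominated family of probability measures on (X,A) and Π a prior on 𝒫. If P0 lies in the Hellinger support of Π (i.e. Π assigns positive mass to every Hellinger ball centered at P0), then for every n ≥ 1 the n-fold product P0ⁿ is absolutely continuous with respect to the n-fold prior predictive distribution Pₙ^Π defined by Pₙ^Π(A) = ∫ Pⁿ(A) dΠ(P). -/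
/-
Suppose `Pⁿ(s) = 0` for `Π`-almost every `P`. Since every Hellinger ball around `P0` has positive
prior mass, for each `ε > 0` some such `P` satisfies `H(P, P0) < ε`. Writing `p, q` for densities,
`Q(B) ≤ P(B) + ∫ (q - p)⁺ dμ`, and `∫ (q - p)⁺ dμ ≤ 2 H(P, Q)` by Cauchy–Schwarz applied to
`q - p = (√q - √p)(√q + √p)`. This one-sided total-variation bound adds up over the `n` factors of a
product, so `P0ⁿ(s) ≤ Pⁿ(s) + 2nε = 2nε` for every `ε > 0`.
-/

open MeasureTheory Set Filter Topology
open scoped ENNReal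

/-- The Hellinger distance between two measures relative to a dominating measure `μ`. -/
noncomputable def hellingerDist {X : Type*} [MeasurableSpace X] (μ : Measure X)
    (P Q : Measure X) : ℝ :=
  Real.sqrt (∫ x, (Real.sqrt (P.rnDeriv μ x).toReal - Real.sqrt (Q.rnDeriv μ x).toReal) ^ 2 ∂μ)

theorem ENNReal.sub_le_ofReal_abs_sqrt_sub_mul {a b : ℝ≥0∞} (ha : a ≠ ∞) (hb : b ≠ ∞) :
    b - a ≤ ENNReal.ofReal |√a.toReal - √b.toReal| * ENNReal.ofReal (√b.toReal + √a.toReal) := by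
  rw [← ENNReal.ofReal_toReal ha, ← ENNReal.ofReal_toReal hb,
    ← ENNReal.ofReal_sub _ ENNReal.toReal_nonneg, ← ENNReal.ofReal_mul (abs_nonneg _),
    ENNReal.toReal_ofReal ENNReal.toReal_nonneg, ENNReal.toReal_ofReal ENNReal.toReal_nonneg]
  refine ENNReal.ofReal_le_ofReal ?_
  calc b.toReal - a.toReal = (√b.toReal - √a.toReal) * (√b.toReal + √a.toReal) := by
        rw [mul_comm, ← sq_sub_sq, Real.sq_sqrt ENNReal.toReal_nonneg,
          Real.sq_sqrt ENNReal.toReal_nonneg]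
    _ ≤ |√a.toReal - √b.toReal| * (√b.toReal + √a.toReal) := by
        rw [abs_sub_comm]; gcongr; exact le_abs_self _

section

variable {X : Type*} [MeasurableSpace X] {μ P Q : Measure X}

theorem lintegral_ofReal_abs_sqrt_rnDeriv_sub_rpow_two [IsFiniteMeasure P] [IsFiniteMeasure Q] :
    ∫⁻ x, ENNReal.ofReal |√(P.rnDeriv μ x).toReal - √(Q.rnDeriv μ x).toReal| ^ (2 : ℝ) ∂μ
      = ENNReal.ofReal (hellingerDist μ P Q) ^ (2 : ℝ) := by
  have integrable_sq :
      Integrable (fun x => (√(P.rnDeriv μ x).toReal - √(Q.rnDeriv μ x).toReal) ^ 2) μ := by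
    refine ((Measure.integrable_toReal_rnDeriv (μ := P) (ν := μ)).add
      (Measure.integrable_toReal_rnDeriv (μ := Q))).mono'
      (((P.measurable_rnDeriv μ).ennreal_toReal.sqrt.sub
        (Q.measurable_rnDeriv μ).ennreal_toReal.sqrt).pow_const 2).aestronglyMeasurable
      (ae_of_all _ fun x => ?_)
    rw [Real.norm_eq_abs, abs_of_nonneg (sq_nonneg _), Pi.add_apply]
    nlinarith [Real.sq_sqrt (ENNReal.toReal_nonneg (a := P.rnDeriv μ x)),
      Real.sq_sqrt (ENNReal.toReal_nonneg (a := Q.rnDeriv μ x)),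
      Real.sqrt_nonneg (P.rnDeriv μ x).toReal, Real.sqrt_nonneg (Q.rnDeriv μ x).toReal]
  have rpow_two_eq (x : X) :
      ENNReal.ofReal |√(P.rnDeriv μ x).toReal - √(Q.rnDeriv μ x).toReal| ^ (2 : ℝ)
        = ENNReal.ofReal ((√(P.rnDeriv μ x).toReal - √(Q.rnDeriv μ x).toReal) ^ 2) := by
    rw [ENNReal.ofReal_rpow_of_nonneg (abs_nonneg _) zero_le_two, Real.rpow_two, sq_abs]
  rw [lintegral_congr fun x => rpow_two_eq x, hellingerDist,
    ENNReal.ofReal_rpow_of_nonneg (Real.sqrt_nonneg _) zero_le_two, Real.rpow_two,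
    Real.sq_sqrt (integral_nonneg fun x => sq_nonneg _),
    ofReal_integral_eq_lintegral_ofReal integrable_sq (ae_of_all _ fun x => sq_nonneg _)]

theorem lintegral_ofReal_sqrt_rnDeriv_add_rpow_two_le [P.HaveLebesgueDecomposition μ]
    [Q.HaveLebesgueDecomposition μ] [IsProbabilityMeasure P] [IsProbabilityMeasure Q]
    (hP : P ≪ μ) (hQ : Q ≪ μ) :
    ∫⁻ x, ENNReal.ofReal (√(Q.rnDeriv μ x).toReal + √(P.rnDeriv μ x).toReal) ^ (2 : ℝ) ∂μ
      ≤ 4 := by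
  have sq_le (a b : ℝ≥0∞) :
      ENNReal.ofReal (√b.toReal + √a.toReal) ^ (2 : ℝ) ≤ 2 * b + 2 * a := by
    rw [ENNReal.ofReal_rpow_of_nonneg (by positivity) zero_le_two, Real.rpow_two]
    calc ENNReal.ofReal ((√b.toReal + √a.toReal) ^ 2)
        ≤ ENNReal.ofReal (2 * b.toReal + 2 * a.toReal) := by
          refine ENNReal.ofReal_le_ofReal ?_
          nlinarith [Real.sq_sqrt (ENNReal.toReal_nonneg (a := a)),
            Real.sq_sqrt (ENNReal.toReal_nonneg (a := b)), sq_nonneg (√b.toReal - √a.toReal)]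
      _ ≤ 2 * b + 2 * a := by
          rw [ENNReal.ofReal_add (by positivity) (by positivity), ENNReal.ofReal_mul zero_le_two,
            ENNReal.ofReal_mul zero_le_two, ENNReal.ofReal_ofNat]
          gcongr <;> exact ENNReal.ofReal_toReal_le
  calc _ ≤ ∫⁻ x, 2 * Q.rnDeriv μ x + 2 * P.rnDeriv μ x ∂μ := lintegral_mono fun x => sq_le _ _
    _ = 4 := by
        rw [lintegral_add_left ((Q.measurable_rnDeriv μ).const_mul 2),
          lintegral_const_mul _ (Q.measurable_rnDeriv μ),
          lintegral_const_mul _ (P.measurable_rnDeriv μ),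
          Measure.lintegral_rnDeriv hQ, Measure.lintegral_rnDeriv hP, measure_univ, measure_univ]
        norm_num

theorem lintegral_rnDeriv_sub_le_two_mul_hellingerDist [P.HaveLebesgueDecomposition μ]
    [Q.HaveLebesgueDecomposition μ] [IsProbabilityMeasure P] [IsProbabilityMeasure Q]
    (hP : P ≪ μ) (hQ : Q ≪ μ) :
    ∫⁻ x, Q.rnDeriv μ x - P.rnDeriv μ x ∂μ ≤ 2 * ENNReal.ofReal (hellingerDist μ P Q) := by
  set f := fun x => ENNReal.ofReal |√(P.rnDeriv μ x).toReal - √(Q.rnDeriv μ x).toReal|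
  set g := fun x => ENNReal.ofReal (√(Q.rnDeriv μ x).toReal + √(P.rnDeriv μ x).toReal)
  have hf : Measurable f := ((P.measurable_rnDeriv μ).ennreal_toReal.sqrt.sub
    (Q.measurable_rnDeriv μ).ennreal_toReal.sqrt).abs.ennreal_ofReal
  have hg : Measurable g := ((Q.measurable_rnDeriv μ).ennreal_toReal.sqrt.add
    (P.measurable_rnDeriv μ).ennreal_toReal.sqrt).ennreal_ofReal
  calc ∫⁻ x, Q.rnDeriv μ x - P.rnDeriv μ x ∂μ ≤ ∫⁻ x, (f * g) x ∂μ := by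
        refine lintegral_mono_ae ?_
        filter_upwards [P.rnDeriv_lt_top μ, Q.rnDeriv_lt_top μ] with x hPx hQx
        exact ENNReal.sub_le_ofReal_abs_sqrt_sub_mul hPx.ne hQx.ne
    _ ≤ (∫⁻ x, f x ^ (2 : ℝ) ∂μ) ^ (1 / 2 : ℝ) * (∫⁻ x, g x ^ (2 : ℝ) ∂μ) ^ (1 / 2 : ℝ) :=
        ENNReal.lintegral_mul_le_Lp_mul_Lq μ .two_two hf.aemeasurable hg.aemeasurable
    _ ≤ (ENNReal.ofReal (hellingerDist μ P Q) ^ (2 : ℝ)) ^ (1 / 2 : ℝ) * 4 ^ (1 / 2 : ℝ) := by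
        rw [lintegral_ofReal_abs_sqrt_rnDeriv_sub_rpow_two]
        gcongr
        exact lintegral_ofReal_sqrt_rnDeriv_add_rpow_two_le hP hQ
    _ = 2 * ENNReal.ofReal (hellingerDist μ P Q) := by
        rw [← ENNReal.rpow_mul, show (4 : ℝ≥0∞) = 2 ^ (2 : ℝ) by norm_num, ← ENNReal.rpow_mul]
        norm_num [mul_comm]

theorem lintegral_le_lintegral_add_lintegral_rnDeriv_sub [P.HaveLebesgueDecomposition μ]
    [Q.HaveLebesgueDecomposition μ] (hP : P ≪ μ) (hQ : Q ≪ μ) {f : X → ℝ≥0∞}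
    (hf : Measurable f) (hf_le : ∀ x, f x ≤ 1) :
    ∫⁻ x, f x ∂Q ≤ ∫⁻ x, f x ∂P + ∫⁻ x, Q.rnDeriv μ x - P.rnDeriv μ x ∂μ := by
  rw [← lintegral_rnDeriv_mul hQ hf.aemeasurable, ← lintegral_rnDeriv_mul hP hf.aemeasurable,
    ← lintegral_add_right (g := fun x => Q.rnDeriv μ x - P.rnDeriv μ x) _
      ((Q.measurable_rnDeriv μ).sub (P.measurable_rnDeriv μ))]
  refine lintegral_mono fun x => ?_
  calc Q.rnDeriv μ x * f x ≤ (P.rnDeriv μ x + (Q.rnDeriv μ x - P.rnDeriv μ x)) * f x := by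
        gcongr; exact le_add_tsub
    _ ≤ P.rnDeriv μ x * f x + (Q.rnDeriv μ x - P.rnDeriv μ x) := by
        rw [add_mul]; gcongr; exact mul_le_of_le_one_right' (hf_le x)

theorem prod_apply_le_add_lintegral_rnDeriv_sub [P.HaveLebesgueDecomposition μ]
    [Q.HaveLebesgueDecomposition μ] [IsProbabilityMeasure Q] (hP : P ≪ μ) (hQ : Q ≪ μ)
    {Y : Type*} [MeasurableSpace Y] {P' Q' : Measure Y} [IsProbabilityMeasure P'] [SFinite Q'] {c : ℝ≥0∞}
    (h' : ∀ B, MeasurableSet B → Q' B ≤ P' B + c) {B : Set (X × Y)} (hB : MeasurableSet B) :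
    Q.prod Q' B ≤ P.prod P' B + (∫⁻ x, Q.rnDeriv μ x - P.rnDeriv μ x ∂μ + c) := by
  rw [Measure.prod_apply hB, Measure.prod_apply hB, ← add_assoc]
  calc ∫⁻ x, Q' (Prod.mk x ⁻¹' B) ∂Q
      ≤ ∫⁻ x, (P' (Prod.mk x ⁻¹' B) + c) ∂Q :=
        lintegral_mono fun x => h' _ (hB.preimage measurable_prodMk_left)
    _ = ∫⁻ x, P' (Prod.mk x ⁻¹' B) ∂Q + c := by
        rw [lintegral_add_right _ measurable_const, lintegral_const, measure_univ, mul_one]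
    _ ≤ ∫⁻ x, P' (Prod.mk x ⁻¹' B) ∂P + ∫⁻ x, Q.rnDeriv μ x - P.rnDeriv μ x ∂μ + c := by
        gcongr
        exact lintegral_le_lintegral_add_lintegral_rnDeriv_sub hP hQ
          (measurable_measure_prodMk_left hB) fun x => prob_le_one

theorem pi_apply_le_add_mul_lintegral_rnDeriv_sub [P.HaveLebesgueDecomposition μ]
    [Q.HaveLebesgueDecomposition μ] [IsProbabilityMeasure P] [IsProbabilityMeasure Q]
    (hP : P ≪ μ) (hQ : Q ≪ μ) (n : ℕ) {B : Set (Fin n → X)} (hB : MeasurableSet B) :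
    Measure.pi (fun _ => Q) B
      ≤ Measure.pi (fun _ => P) B + n * ∫⁻ x, Q.rnDeriv μ x - P.rnDeriv μ x ∂μ := by
  induction n with
  | zero =>
    simp [Measure.pi_of_empty (fun _ : Fin 0 => Q), Measure.pi_of_empty (fun _ : Fin 0 => P)]
  | succ n ih =>
    let e := MeasurableEquiv.piFinSuccAbove (fun _ : Fin (n + 1) => X) 0
    have pi_apply_eq (R : Measure X) [IsProbabilityMeasure R] :
        Measure.pi (fun _ => R) B = R.prod (Measure.pi fun _ : Fin n => R) (e.symm ⁻¹' B) := by
      rw [← (measurePreserving_piFinSuccAbove (fun _ => R) 0).map_eq,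
        Measure.map_apply e.measurable (e.symm.measurable hB), ← preimage_comp,
        e.symm_comp_self, preimage_id]
    rw [pi_apply_eq, pi_apply_eq]
    refine (prod_apply_le_add_lintegral_rnDeriv_sub hP hQ (fun _ hB' => ih hB')
      (e.symm.measurable hB)).trans_eq ?_
    push_cast
    ring

theorem pi_apply_le_add_mul_hellingerDist [P.HaveLebesgueDecomposition μ]
    [Q.HaveLebesgueDecomposition μ] [IsProbabilityMeasure P] [IsProbabilityMeasure Q]
    (hP : P ≪ μ) (hQ : Q ≪ μ) (n : ℕ) {B : Set (Fin n → X)} (hB : MeasurableSet B) :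
    Measure.pi (fun _ => Q) B
      ≤ Measure.pi (fun _ => P) B + n * (2 * ENNReal.ofReal (hellingerDist μ P Q)) :=
  (pi_apply_le_add_mul_lintegral_rnDeriv_sub hP hQ n hB).trans <| by
    gcongr; exact lintegral_rnDeriv_sub_le_two_mul_hellingerDist hP hQ

theorem MeasureTheory.ProbabilityMeasure.measurable_pi_const (ι : Type*) [Fintype ι] :
    Measurable fun P : ProbabilityMeasure X => Measure.pi fun _ : ι => (P : Measure X) := by
  refine .measure_of_isPiSystem_of_isProbabilityMeasure generateFrom_pi.symm isPiSystem_pi ?_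
  rintro _ ⟨t, ht, rfl⟩
  simp_rw [Measure.pi_pi]
  exact Finset.measurable_prod _ fun i _ =>
    (Measure.measurable_coe (ht i (mem_univ i))).comp measurable_subtype_coe

theorem aemeasurable_pi_const_of_ae_isProbabilityMeasure {Pri : Measure (Measure X)}
    (h : ∀ᵐ P ∂Pri, IsProbabilityMeasure P) (ι : Type*) [Fintype ι] :
    AEMeasurable (fun P => Measure.pi fun _ : ι => P) Pri := by
  rw [← Measure.restrict_eq_self_of_ae_mem h]
  exact aemeasurable_restrict_of_measurable_subtype
    ProbabilityMeasure.measurableSet_isProbabilityMeasure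
    (ProbabilityMeasure.measurable_pi_const ι)

end

theorem hellinger_support_implies_priorPredictive_dominates_general
    {X : Type*} [MeasurableSpace X] (μ : Measure X) [SigmaFinite μ]
    (Pri : Measure (Measure X))
    (P0 : Measure X) [IsProbabilityMeasure P0] (hP0 : P0 ≪ μ)
    (hmodel : ∀ᵐ P ∂Pri, IsProbabilityMeasure P ∧ P ≪ μ)
    (hsupp : ∀ ε : ℝ, 0 < ε → 0 < Pri {P | hellingerDist μ P P0 < ε}) :
    ∀ n : ℕ, 1 ≤ n →
      Measure.pi (fun _ : Fin n => P0)
        ≪ Pri.bind (fun P => Measure.pi (fun _ : Fin n => P)) := by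
  intro n _
  have hF :=
    aemeasurable_pi_const_of_ae_isProbabilityMeasure (hmodel.mono fun _ => And.left) (Fin n)
  refine Measure.AbsolutelyContinuous.mk fun s hs hs0 => ?_
  rw [Measure.bind_apply hs hF] at hs0
  replace hs0 := (lintegral_eq_zero_iff' ((Measure.measurable_coe hs).comp_aemeasurable hF)).1 hs0
  have bound (ε : ℝ) (hε : 0 < ε) :
      Measure.pi (fun _ => P0) s ≤ n * (2 * ENNReal.ofReal ε) := by
    obtain ⟨P, hPε, ⟨hP, hPμ⟩, hPs⟩ := Measure.exists_mem_of_measure_ne_zero_of_ae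
      (hsupp ε hε).ne' (ae_restrict_of_ae (hmodel.and hs0))
    change Measure.pi (fun _ => P) s = 0 at hPs
    calc Measure.pi (fun _ => P0) s
        ≤ Measure.pi (fun _ => P) s + n * (2 * ENNReal.ofReal (hellingerDist μ P P0)) :=
          pi_apply_le_add_mul_hellingerDist hPμ hP0 n hs
      _ ≤ n * (2 * ENNReal.ofReal ε) := by
          rw [hPs, zero_add]; gcongr; exact hPε.le
  have tendsto_bound :
      Tendsto (fun ε : ℝ => (n : ℝ≥0∞) * (2 * ENNReal.ofReal ε)) (𝓝[>] 0) (𝓝 0) := by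
    refine (Continuous.tendsto' ?_ 0 0 (by simp)).mono_left nhdsWithin_le_nhds
    exact (ENNReal.continuous_const_mul (ENNReal.natCast_ne_top n)).comp
      ((ENNReal.continuous_const_mul ENNReal.ofNat_ne_top).comp ENNReal.continuous_ofReal)
  exact le_antisymm (ge_of_tendsto tendsto_bound (eventually_nhdsWithin_of_forall bound)) zero_le

/-- If `P0` lies in the Hellinger support of the prior `Π` on a dominated model (i.e. every
Hellinger ball around `P0` has positive prior mass), then for every `n ≥ 1` the `n`-fold
product `P0ⁿ` is absolutely continuous w.r.t. the `n`-fold prior predictive distribution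
`Pₙ^Π(A) = ∫ Pⁿ(A) dΠ(P)`. -/
theorem hellinger_support_implies_priorPredictive_dominates
    {X : Type*} [MeasurableSpace X] (μ : Measure X) [SigmaFinite μ]
    (Pri : Measure (Measure X)) [IsProbabilityMeasure Pri]
    (P0 : Measure X) [IsProbabilityMeasure P0] (hP0 : P0 ≪ μ)
    (hmodel : ∀ᵐ P ∂Pri, IsProbabilityMeasure P ∧ P ≪ μ)
    (hsupp : ∀ ε : ℝ, 0 < ε → 0 < Pri {P | hellingerDist μ P P0 < ε}) :
    ∀ n : ℕ, 1 ≤ n →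
      Measure.pi (fun _ : Fin n => P0)
        ≪ Pri.bind (fun P => Measure.pi (fun _ : Fin n => P)) :=
  hellinger_support_implies_priorPredictive_dominates_general μ Pri P0 hP0 hmodel hsupp
end

section
/- Let r > 1 and s be conjugate exponents (1/r + 1/s = 1), and let P0, P, Q be probability measures with μ-densities p0, p, q. Then P0[(p/q)^{1/r}] ≤ ρ_{1/r}(P0, P) + d_r(P0, Q) · (P0[(p/q)^{s/r}])^{1/s}, where ρ_{1/r}(P0,P) = ∫ p0^{1−1/r} p^{1/r} dμ is the Hellinger transform and d_r(P,Q) = (∫|p^{1/r} − q^{1/r}|^r dμ)^{1/r} is Matusita's r-metric distance. -/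
/-!
Write `p0 = p0^(1-1/r) · p0^(1/r)` and split `p0^(1/r) = q^(1/r) + (p0^(1/r) - q^(1/r))`.
Against `(p/q)^(1/r)` the first part yields the Hellinger integrand `p0^(1-1/r) p^(1/r)`; the
second is at most `|p0^(1/r) - q^(1/r)| · p0^(1-1/r) (p/q)^(1/r)`, and Hölder's inequality with
exponents `r, s` bounds its integral, since `(p0^(1-1/r) (p/q)^(1/r))^s = (p/q)^(s/r) p0`.
-/

open MeasureTheory

section Holder

variable {X : Type*} [MeasurableSpace X] {μ : Measure X}

lemma memLp_of_integrable_rpow_of_nonneg {f : X → ℝ} {t : ℝ} (ht : 0 < t) (hf : 0 ≤ᵐ[μ] f)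
    (hft : Integrable (fun x => f x ^ t) μ) : MemLp f (ENNReal.ofReal t) μ := by
  -- measurability of `f` is recovered from `f = (f ^ t) ^ t⁻¹`
  have hf_eq : (fun x => (f x ^ t) ^ t⁻¹) =ᵐ[μ] f := by
    filter_upwards [hf] with x hx using Real.rpow_rpow_inv hx ht.ne'
  have hfm : AEStronglyMeasurable f μ :=
    (hft.aemeasurable.pow_const t⁻¹).aestronglyMeasurable.congr hf_eq
  refine (integrable_norm_rpow_iff hfm (by simpa using ht) ENNReal.ofReal_ne_top).1 ?_
  refine hft.congr ?_
  filter_upwards [hf] with x hx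
  rw [ENNReal.toReal_ofReal ht.le, Real.norm_of_nonneg hx]

variable {r s : ℝ} {f g : X → ℝ}

lemma integrable_mul_of_integrable_rpow (hrs : r.HolderConjugate s) (hf : 0 ≤ᵐ[μ] f)
    (hg : 0 ≤ᵐ[μ] g) (hfr : Integrable (fun x => f x ^ r) μ)
    (hgs : Integrable (fun x => g x ^ s) μ) : Integrable (fun x => f x * g x) μ :=
  have := hrs.ennrealOfReal
  (memLp_of_integrable_rpow_of_nonneg hrs.pos hf hfr).integrable_mul
    (memLp_of_integrable_rpow_of_nonneg hrs.symm.pos hg hgs)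

lemma integral_mul_le_of_integrable_rpow (hrs : r.HolderConjugate s) (hf : 0 ≤ᵐ[μ] f)
    (hg : 0 ≤ᵐ[μ] g) (hfr : Integrable (fun x => f x ^ r) μ)
    (hgs : Integrable (fun x => g x ^ s) μ) :
    ∫ x, f x * g x ∂μ ≤ (∫ x, f x ^ r ∂μ) ^ (1 / r) * (∫ x, g x ^ s ∂μ) ^ (1 / s) :=
  integral_mul_le_Lp_mul_Lq_of_nonneg hrs hf hg
    (memLp_of_integrable_rpow_of_nonneg hrs.pos hf hfr)
    (memLp_of_integrable_rpow_of_nonneg hrs.symm.pos hg hgs)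

end Holder

lemma rpow_div_mul_le {a b c θ : ℝ} (ha : 0 ≤ a) (hb : 0 ≤ b) (hc : 0 ≤ c) (hθ : θ ≠ 0) :
    (b / c) ^ θ * a ≤ a ^ (1 - θ) * b ^ θ + |a ^ θ - c ^ θ| * (a ^ (1 - θ) * (b / c) ^ θ) := by
  have hrhs : 0 ≤ a ^ (1 - θ) * b ^ θ + |a ^ θ - c ^ θ| * (a ^ (1 - θ) * (b / c) ^ θ) := by
    positivity
  rcases hc.eq_or_lt with rfl | hc
  · -- `b / 0 = 0`, so the left side vanishes
    simpa [Real.zero_rpow hθ] using hrhs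
  rcases ha.eq_or_lt with rfl | ha
  · simpa using hrhs
  have hsplit : (b / c) ^ θ * a
      = a ^ (1 - θ) * (b / c) ^ θ * c ^ θ + (a ^ θ - c ^ θ) * (a ^ (1 - θ) * (b / c) ^ θ) := by
    have ha_split : a ^ (1 - θ) * a ^ θ = a := by rw [← Real.rpow_add ha]; simp
    linear_combination (-(b / c) ^ θ) * ha_split
  have hcancel : a ^ (1 - θ) * (b / c) ^ θ * c ^ θ = a ^ (1 - θ) * b ^ θ := by
    rw [mul_assoc, ← Real.mul_rpow (div_nonneg hb hc.le) hc.le, div_mul_cancel₀ b hc.ne']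
  rw [hsplit, hcancel]
  gcongr
  exact le_abs_self _

lemma rpow_one_sub_inv_mul_rpow_inv_rpow {a b r s : ℝ} (ha : 0 ≤ a) (hb : 0 ≤ b)
    (hrs : r.HolderConjugate s) :
    (a ^ (1 - 1 / r) * b ^ (1 / r)) ^ s = b ^ (s / r) * a := by
  rw [Real.mul_rpow (by positivity) (by positivity), ← Real.rpow_mul ha, ← Real.rpow_mul hb,
    one_div, hrs.one_sub_inv, inv_mul_cancel₀ hrs.symm.ne_zero, Real.rpow_one, mul_comm,
    inv_mul_eq_div]

theorem matusita_moment_bound_general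
    {X : Type*} [MeasurableSpace X] (μ : Measure X)
    (r s : ℝ) (hr : 1 < r) (hrs : 1 / r + 1 / s = 1)
    (p0 p q : X → ℝ)
    (hp00 : ∀ x, 0 ≤ p0 x) (hp0 : ∀ x, 0 ≤ p x) (hq0 : ∀ x, 0 ≤ q x)
    (hIntHT : Integrable (fun x => p0 x ^ (1 - 1 / r) * p x ^ (1 / r)) μ)
    (hIntdr : Integrable (fun x => |p0 x ^ (1 / r) - q x ^ (1 / r)| ^ r) μ)
    (hIntsr : Integrable (fun x => (p x / q x) ^ (s / r) * p0 x) μ) :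
    ∫ x, (p x / q x) ^ (1 / r) * p0 x ∂μ
      ≤ (∫ x, p0 x ^ (1 - 1 / r) * p x ^ (1 / r) ∂μ)
        + (∫ x, |p0 x ^ (1 / r) - q x ^ (1 / r)| ^ r ∂μ) ^ (1 / r)
          * (∫ x, (p x / q x) ^ (s / r) * p0 x ∂μ) ^ (1 / s) := by
  have hconj : r.HolderConjugate s :=
    Real.holderConjugate_iff.2 ⟨hr, by simpa only [one_div] using hrs⟩
  have hθ : 1 / r ≠ 0 := (one_div_pos.2 hconj.pos).ne'
  have hpq : ∀ x, 0 ≤ p x / q x := fun x => div_nonneg (hp0 x) (hq0 x)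
  set g : X → ℝ := fun x => |p0 x ^ (1 / r) - q x ^ (1 / r)|
  set h : X → ℝ := fun x => p0 x ^ (1 - 1 / r) * (p x / q x) ^ (1 / r)
  have hg : 0 ≤ᵐ[μ] g := .of_forall fun x => abs_nonneg _
  have hh : 0 ≤ᵐ[μ] h := .of_forall fun x =>
    mul_nonneg (Real.rpow_nonneg (hp00 x) _) (Real.rpow_nonneg (hpq x) _)
  have hh_pow : (fun x => h x ^ s) = fun x => (p x / q x) ^ (s / r) * p0 x := funext fun x =>
    rpow_one_sub_inv_mul_rpow_inv_rpow (hp00 x) (hpq x) hconj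
  have hhs : Integrable (fun x => h x ^ s) μ := hh_pow ▸ hIntsr
  have hgh_int := integrable_mul_of_integrable_rpow hconj hg hh hIntdr hhs
  calc ∫ x, (p x / q x) ^ (1 / r) * p0 x ∂μ
      ≤ ∫ x, (p0 x ^ (1 - 1 / r) * p x ^ (1 / r) + g x * h x) ∂μ :=
        integral_mono_of_nonneg
          (.of_forall fun x => mul_nonneg (Real.rpow_nonneg (hpq x) _) (hp00 x))
          (hIntHT.add hgh_int)
          (.of_forall fun x => rpow_div_mul_le (hp00 x) (hp0 x) (hq0 x) hθ)
    _ = (∫ x, p0 x ^ (1 - 1 / r) * p x ^ (1 / r) ∂μ) + ∫ x, g x * h x ∂μ :=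
        integral_add hIntHT hgh_int
    _ ≤ _ := by
        grw [integral_mul_le_of_integrable_rpow hconj hg hh hIntdr hhs, hh_pow]

/-- Hölder bound through Matusita's `r`-metric: for conjugate exponents `r, s > 1` and
probability densities `p0, p, q` w.r.t. `μ`,
`P0[(p/q)^{1/r}] ≤ ρ_{1/r}(P0,P) + d_r(P0,Q) · (P0[(p/q)^{s/r}])^{1/s}`, where
`ρ_{1/r}(P0,P) = ∫ p0^{1−1/r} p^{1/r} dμ` is the Hellinger transform and
`d_r(P,Q) = (∫|p^{1/r}−q^{1/r}|^r dμ)^{1/r}` is Matusita's `r`-metric distance. -/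
theorem matusita_moment_bound
    {X : Type*} [MeasurableSpace X] (μ : Measure X) [SigmaFinite μ]
    (r s : ℝ) (hr : 1 < r) (hrs : 1 / r + 1 / s = 1)
    (p0 p q : X → ℝ) (hp0m : Measurable p0) (hpm : Measurable p) (hqm : Measurable q)
    (hp00 : ∀ x, 0 ≤ p0 x) (hp0 : ∀ x, 0 ≤ p x) (hq0 : ∀ x, 0 ≤ q x)
    (hprob0 : ∫ x, p0 x ∂μ = 1) (hprobp : ∫ x, p x ∂μ = 1) (hprobq : ∫ x, q x ∂μ = 1)
    (hqpos : ∀ᵐ x ∂μ, 0 < p0 x * p x → 0 < q x)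
    (hIntLHS : Integrable (fun x => (p x / q x) ^ (1 / r) * p0 x) μ)
    (hIntHT : Integrable (fun x => p0 x ^ (1 - 1 / r) * p x ^ (1 / r)) μ)
    (hIntdr : Integrable (fun x => |p0 x ^ (1 / r) - q x ^ (1 / r)| ^ r) μ)
    (hIntsr : Integrable (fun x => (p x / q x) ^ (s / r) * p0 x) μ) :
    ∫ x, (p x / q x) ^ (1 / r) * p0 x ∂μ
      ≤ (∫ x, p0 x ^ (1 - 1 / r) * p x ^ (1 / r) ∂μ)
        + (∫ x, |p0 x ^ (1 / r) - q x ^ (1 / r)| ^ r ∂μ) ^ (1 / r)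
          * (∫ x, (p x / q x) ^ (s / r) * p0 x ∂μ) ^ (1 / s) :=
  matusita_moment_bound_general μ r s hr hrs p0 p q hp00 hp0 hq0 hIntHT hIntdr hIntsr
end

section
/- Let P0 and Q be probability measures with μ-densities p0 and q, let P be a probability measure with density p, and let r, s > 1 with 1/r + 1/s = 1. Writing P0[(dP/dQ)^{1−}] for the limit of P0[(dP/dQ)^α] as α ↑ 1, one has P0[(dP/dQ)^{1−}] ≤ P(p0 > 0) + ‖dP0/dQ − 1‖_{s,Q} · ‖dP/dQ‖_{r,Q}, where ‖f‖_{t,Q} = (∫|f|^t dQ)^{1/t}. -/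
open MeasureTheory Set Filter

lemma memLp_of_integrable_abs_rpow {X : Type*} [MeasurableSpace X] {μ : Measure X}
    {f : X → ℝ} {s : ℝ} (hs : 1 < s) (hf : AEStronglyMeasurable f μ)
    (h : Integrable (fun x => |f x| ^ s) μ) : MemLp f (ENNReal.ofReal s) μ := by
  have hs0 : (0:ℝ) < s := lt_trans one_pos hs
  have hq0 : ENNReal.ofReal s ≠ 0 := by
    simp only [ne_eq, ENNReal.ofReal_eq_zero, not_le]; exact hs0
  refine (memLp_norm_rpow_iff (q := ENNReal.ofReal s) (p := ENNReal.ofReal s) hf hq0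
    ENNReal.ofReal_ne_top).1 ?_
  rw [ENNReal.div_self hq0 ENNReal.ofReal_ne_top, ENNReal.toReal_ofReal hs0.le,
    memLp_one_iff_integrable]
  simpa [Real.norm_eq_abs] using h

/-- Bound on the upper limit moment `P0[(dP/dQ)^{1−}]`: if the map
`α ↦ P0[(dP/dQ)^α] = ∫ (p/q)^α p0 dμ` converges to `L` as `α ↑ 1`, then
`L ≤ P(p0 > 0) + ‖dP0/dQ − 1‖_{s,Q} · ‖dP/dQ‖_{r,Q}` for conjugate exponents
`r, s > 1`, where `‖f‖_{t,Q} = (∫ |f|^t dQ)^{1/t} = (∫ |f|^t q dμ)^{1/t}`.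
Here `p0, p, q` are probability densities w.r.t. the σ-finite measure `μ`, and `p`
vanishes where `q` does. -/
theorem limit_moment_le_holder_bound
    {X : Type*} [MeasurableSpace X] (μ : Measure X) [SigmaFinite μ]
    (r s : ℝ) (hr : 1 < r) (hs : 1 < s) (hrs : 1 / r + 1 / s = 1)
    (p0 p q : X → ℝ) (hp0m : Measurable p0) (hpm : Measurable p) (hqm : Measurable q)
    (hp00 : ∀ x, 0 ≤ p0 x) (hp0 : ∀ x, 0 ≤ p x) (hq0 : ∀ x, 0 ≤ q x)
    (hprob0 : ∫ x, p0 x ∂μ = 1) (hprobp : ∫ x, p x ∂μ = 1) (hprobq : ∫ x, q x ∂μ = 1)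
    (hsupp : ∀ᵐ x ∂μ, q x = 0 → p x = 0)
    (hIntS : Integrable (fun x => |p0 x / q x - 1| ^ s * q x) μ)
    (hIntR : Integrable (fun x => (p x / q x) ^ r * q x) μ)
    (L : ℝ)
    (hlim : Tendsto (fun α : ℝ => ∫ x, (p x / q x) ^ α * p0 x ∂μ)
      (nhdsWithin 1 (Iio 1)) (nhds L)) :
    L ≤ (∫ x in {x | 0 < p0 x}, p x ∂μ)
        + (∫ x, |p0 x / q x - 1| ^ s * q x ∂μ) ^ (1 / s)
          * (∫ x, (p x / q x) ^ r * q x ∂μ) ^ (1 / r) := by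
  have hr0 : (0:ℝ) < r := lt_trans one_pos hr
  have hs0 : (0:ℝ) < s := lt_trans one_pos hs
  have hconj : Real.HolderConjugate s r :=
    Real.holderConjugate_iff.mpr ⟨hs, by rw [← one_div, ← one_div, add_comm]; exact hrs⟩
  -- measurability basics
  have hdm : Measurable fun x => p x / q x := hpm.div hqm
  have hdm0 : Measurable fun x => p0 x / q x - 1 := (hp0m.div hqm).sub measurable_const
  -- integrability of p0, p
  have hInt_p0 : Integrable p0 μ := by
    by_contra h
    rw [integral_undef h] at hprob0; norm_num at hprob0
  have hInt_p : Integrable p μ := by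
    by_contra h
    rw [integral_undef h] at hprobp; norm_num at hprobp
  -- Young: integrability of the mixed term (with abs)
  have hIntM : Integrable (fun x => |p0 x / q x - 1| * (p x / q x) * q x) μ := by
    refine Integrable.mono' (hIntS.add hIntR)
      ((hdm0.abs.mul hdm).mul hqm).aestronglyMeasurable
      (Eventually.of_forall fun x => ?_)
    have h1 : |p0 x / q x - 1| * (p x / q x) ≤
        |p0 x / q x - 1| ^ s + (p x / q x) ^ r := by
      calc |p0 x / q x - 1| * (p x / q x)
          ≤ |p0 x / q x - 1| ^ s / s + (p x / q x) ^ r / r :=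
            Real.young_inequality_of_nonneg (abs_nonneg _)
              (div_nonneg (hp0 x) (hq0 x)) hconj
        _ ≤ |p0 x / q x - 1| ^ s + (p x / q x) ^ r :=
            add_le_add (div_le_self (Real.rpow_nonneg (abs_nonneg _) _) hs.le)
              (div_le_self (Real.rpow_nonneg (div_nonneg (hp0 x) (hq0 x)) _) hr.le)
    have hnn : 0 ≤ |p0 x / q x - 1| * (p x / q x) * q x :=
      mul_nonneg (mul_nonneg (abs_nonneg _) (div_nonneg (hp0 x) (hq0 x))) (hq0 x)
    rw [Real.norm_of_nonneg hnn]
    calc |p0 x / q x - 1| * (p x / q x) * q x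
        ≤ (|p0 x / q x - 1| ^ s + (p x / q x) ^ r) * q x := by
          apply mul_le_mul_of_nonneg_right h1 (hq0 x)
      _ = |p0 x / q x - 1| ^ s * q x + (p x / q x) ^ r * q x := by ring
  -- mixed term without abs
  have hIntM' : Integrable (fun x => (p0 x / q x - 1) * (p x / q x) * q x) μ := by
    refine Integrable.mono' hIntM ((hdm0.mul hdm).mul hqm).aestronglyMeasurable
      (Eventually.of_forall fun x => ?_)
    rw [Real.norm_eq_abs, abs_mul, abs_mul,
      abs_of_nonneg (div_nonneg (hp0 x) (hq0 x)), abs_of_nonneg (hq0 x)]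
  -- key a.e. identity
  have hkey : ∀ᵐ x ∂μ, (p x / q x) * p0 x
      = (p0 x / q x - 1) * (p x / q x) * q x + p x := by
    filter_upwards [hsupp] with x hx
    by_cases hq : q x = 0
    · simp [hq, hx hq]
    · field_simp
      ring
  -- integrability of g
  have hIntg : Integrable (fun x => (p x / q x) * p0 x) μ :=
    (hIntM'.add hInt_p).congr (by filter_upwards [hkey] with x hx; simp only [Pi.add_apply]; rw [hx])
  -- Step B : the limit equals ∫ g
  have hBody : Tendsto (fun α : ℝ => ∫ x, (p x / q x) ^ α * p0 x ∂μ)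
      (nhdsWithin 1 (Iio 1)) (nhds (∫ x, (p x / q x) * p0 x ∂μ)) := by
    have hmem : Ioo (0:ℝ) 1 ∈ nhdsWithin (1:ℝ) (Iio 1) :=
      Ioo_mem_nhdsLT_of_mem ⟨one_pos, le_refl 1⟩
    refine tendsto_integral_filter_of_dominated_convergence
      (fun x => (1 + p x / q x) * p0 x) ?_ ?_ ?_ ?_
    · exact Eventually.of_forall fun α =>
        ((hdm.pow measurable_const).mul hp0m).aestronglyMeasurable
    · filter_upwards [hmem] with α hα
      refine Eventually.of_forall fun x => ?_
      have ht0 : 0 ≤ p x / q x := div_nonneg (hp0 x) (hq0 x)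
      have h1 : (p x / q x) ^ α ≤ 1 + p x / q x := by
        rcases le_or_gt (p x / q x) 1 with ht | ht
        · calc (p x / q x) ^ α ≤ 1 := Real.rpow_le_one ht0 ht hα.1.le
            _ ≤ 1 + p x / q x := by linarith
        · calc (p x / q x) ^ α ≤ (p x / q x) ^ (1:ℝ) :=
              Real.rpow_le_rpow_of_exponent_le ht.le hα.2.le
            _ = p x / q x := Real.rpow_one _
            _ ≤ 1 + p x / q x := by linarith
      have hnn : 0 ≤ (p x / q x) ^ α * p0 x :=
        mul_nonneg (Real.rpow_nonneg ht0 _) (hp00 x)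
      rw [Real.norm_of_nonneg hnn]
      exact mul_le_mul_of_nonneg_right h1 (hp00 x)
    · exact (hInt_p0.add hIntg).congr (Eventually.of_forall fun x => by simp only [Pi.add_apply]; ring)
    · refine Eventually.of_forall fun x => ?_
      by_cases ht : p x / q x = 0
      · rw [ht]
        have : (fun α : ℝ => (0:ℝ) ^ α * p0 x) =ᶠ[nhdsWithin (1:ℝ) (Iio 1)]
            fun _ => (0:ℝ) * p0 x := by
          filter_upwards [hmem] with α hα
          rw [Real.zero_rpow (ne_of_gt hα.1)]
        exact Tendsto.congr' this.symm tendsto_const_nhds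
      · have hc : ContinuousAt (fun α : ℝ => (p x / q x) ^ α) 1 :=
          Real.continuousAt_const_rpow ht
        have h2 : Tendsto (fun α : ℝ => (p x / q x) ^ α)
            (nhdsWithin 1 (Iio 1)) (nhds ((p x / q x) ^ (1:ℝ))) :=
          hc.tendsto.mono_left nhdsWithin_le_nhds
        simpa [Real.rpow_one] using h2.mul_const (p0 x)
  have hL : L = ∫ x, (p x / q x) * p0 x ∂μ := tendsto_nhds_unique hlim hBody
  set A : Set X := {x | 0 < p0 x} with hA
  have hAm : MeasurableSet A := measurableSet_lt measurable_const hp0m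
  have h1 : ∫ x, (p x / q x) * p0 x ∂μ = ∫ x in A, (p x / q x) * p0 x ∂μ := by
    rw [← integral_indicator hAm]
    refine integral_congr_ae (Eventually.of_forall fun x => ?_)
    by_cases hx : 0 < p0 x
    · simp [indicator_apply, hA, hx]
    · have h0 : p0 x = 0 := le_antisymm (not_lt.1 hx) (hp00 x)
      simp [indicator_apply, hA, hx, h0]
  have h2 : ∫ x in A, (p x / q x) * p0 x ∂μ
      = (∫ x in A, (p0 x / q x - 1) * (p x / q x) * q x ∂μ) + ∫ x in A, p x ∂μ := by
    rw [← integral_add hIntM'.restrict hInt_p.restrict]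
    exact integral_congr_ae (ae_restrict_of_ae hkey)
  have habs_nonneg : ∀ x, 0 ≤ |p0 x / q x - 1| * (p x / q x) * q x := fun x =>
    mul_nonneg (mul_nonneg (abs_nonneg _) (div_nonneg (hp0 x) (hq0 x))) (hq0 x)
  have h3 : ∫ x in A, (p0 x / q x - 1) * (p x / q x) * q x ∂μ
      ≤ ∫ x, |p0 x / q x - 1| * (p x / q x) * q x ∂μ := by
    calc ∫ x in A, (p0 x / q x - 1) * (p x / q x) * q x ∂μ
        ≤ ∫ x in A, |p0 x / q x - 1| * (p x / q x) * q x ∂μ := by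
          refine integral_mono_ae hIntM'.restrict hIntM.restrict
            (Eventually.of_forall fun x => ?_)
          exact mul_le_mul_of_nonneg_right (mul_le_mul_of_nonneg_right (le_abs_self _)
            (div_nonneg (hp0 x) (hq0 x))) (hq0 x)
      _ ≤ ∫ x, |p0 x / q x - 1| * (p x / q x) * q x ∂μ :=
          setIntegral_le_integral hIntM (Eventually.of_forall habs_nonneg)
  -- Hölder step
  have hholder : ∫ x, |p0 x / q x - 1| * (p x / q x) * q x ∂μ
      ≤ (∫ x, |p0 x / q x - 1| ^ s * q x ∂μ) ^ (1 / s)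
        * (∫ x, (p x / q x) ^ r * q x ∂μ) ^ (1 / r) := by
    set f : X → ℝ := fun x => |p0 x / q x - 1| * q x ^ (1 / s) with hf
    set g : X → ℝ := fun x => (p x / q x) * q x ^ (1 / r) with hg
    have hq1s : ∀ x, q x ^ (1 / s) * q x ^ (1 / r) = q x := fun x => by
      by_cases hq : q x = 0
      · rw [hq, Real.zero_rpow (by positivity), zero_mul]
      · rw [← Real.rpow_add (lt_of_le_of_ne (hq0 x) (Ne.symm hq)), add_comm (1 / s),
          hrs, Real.rpow_one]
    have hfs : ∀ x, f x ^ s = |p0 x / q x - 1| ^ s * q x := fun x => by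
      rw [hf, Real.mul_rpow (abs_nonneg _) (Real.rpow_nonneg (hq0 x) _),
        ← Real.rpow_mul (hq0 x), one_div_mul_cancel hs0.ne', Real.rpow_one]
    have hgr : ∀ x, g x ^ r = (p x / q x) ^ r * q x := fun x => by
      rw [hg, Real.mul_rpow (div_nonneg (hp0 x) (hq0 x)) (Real.rpow_nonneg (hq0 x) _),
        ← Real.rpow_mul (hq0 x), one_div_mul_cancel hr0.ne', Real.rpow_one]
    have hfnn : ∀ x, 0 ≤ f x := fun x =>
      mul_nonneg (abs_nonneg _) (Real.rpow_nonneg (hq0 x) _)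
    have hgnn : ∀ x, 0 ≤ g x := fun x =>
      mul_nonneg (div_nonneg (hp0 x) (hq0 x)) (Real.rpow_nonneg (hq0 x) _)
    have hfm : AEStronglyMeasurable f μ :=
      (hdm0.abs.mul (hqm.pow measurable_const)).aestronglyMeasurable
    have hgm : AEStronglyMeasurable g μ :=
      (hdm.mul (hqm.pow measurable_const)).aestronglyMeasurable
    have hfS : MemLp f (ENNReal.ofReal s) μ := by
      refine memLp_of_integrable_abs_rpow hs hfm
        (hIntS.congr (Eventually.of_forall fun x => ?_))
      simp only [abs_of_nonneg (hfnn x)]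
      exact (hfs x).symm
    have hgR : MemLp g (ENNReal.ofReal r) μ := by
      refine memLp_of_integrable_abs_rpow hr hgm
        (hIntR.congr (Eventually.of_forall fun x => ?_))
      simp only [abs_of_nonneg (hgnn x)]
      exact (hgr x).symm
    have hmain := integral_mul_le_Lp_mul_Lq_of_nonneg hconj
      (Eventually.of_forall hfnn) (Eventually.of_forall hgnn) hfS hgR
    have e1 : ∫ x, f x * g x ∂μ = ∫ x, |p0 x / q x - 1| * (p x / q x) * q x ∂μ :=
      integral_congr_ae (Eventually.of_forall fun x => by
        beta_reduce
        have e : |p0 x / q x - 1| * q x ^ (1 / s) * (p x / q x * q x ^ (1 / r))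
            = |p0 x / q x - 1| * (p x / q x) * (q x ^ (1 / s) * q x ^ (1 / r)) := by ring
        rw [e, hq1s x])
    have e2 : ∫ x, f x ^ s ∂μ = ∫ x, |p0 x / q x - 1| ^ s * q x ∂μ :=
      integral_congr_ae (Eventually.of_forall fun x => hfs x)
    have e3 : ∫ x, g x ^ r ∂μ = ∫ x, (p x / q x) ^ r * q x ∂μ :=
      integral_congr_ae (Eventually.of_forall fun x => hgr x)
    rw [e1, e2, e3] at hmain
    exact hmain
  have h4 : ∫ x in A, p x ∂μ = ∫ x in {x | 0 < p0 x}, p x ∂μ := rfl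
  rw [hL, h1, h2]
  have := le_trans h3 hholder
  linarith
end
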